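/- Let A be a unital C*-algebra, p a projection in A, and J a self-adjoint involution with Jp + pJ = J. Then [p] = [(1+J)/2] and [p] = [(1−J)/2] in K₀(A); in particular 2[p] = [1] in K₀(A). -/

import Mathlib

open Matrix

/-- An element of a star ring is a projection if it is a self-adjoint idempotent. -/
def IsProjectionElem {A : Type*} [Mul A] [Star A] (p : A) : Prop :=
  p * p = p ∧ star p = p

/-- Formal generators for `K₀`: square matrices of arbitrary size over `A`. -/
def K0Gen (A : Type*) : Type _ := Σ n : ℕ, Matrix (Fin n) (Fin n) A

namespace K0Gen

variable {A : Type*} [Ring A] [StarRing A]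

/-- A generator is a projection if the matrix is a self-adjoint idempotent. -/
def IsProj (p : K0Gen A) : Prop := p.2 * p.2 = p.2 ∧ star p.2 = p.2

/-- Murray–von Neumann equivalence of matrix projections. -/
def MvN (p q : K0Gen A) : Prop :=
  ∃ v : Matrix (Fin q.1) (Fin p.1) A, vᴴ * v = p.2 ∧ v * vᴴ = q.2

/-- Block diagonal sum of matrix projections. -/
noncomputable def dsum (p q : K0Gen A) : K0Gen A :=
  ⟨p.1 + q.1, Matrix.reindex finSumFinEquiv finSumFinEquiv (Matrix.fromBlocks p.2 0 0 q.2)⟩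

end K0Gen

/-- The defining relations of `K₀(A)`: `[p ⊕ q] = [p] + [q]` for orthogonal block sums of
projections and `[p] = [q]` for Murray–von Neumann equivalent projections. -/
def K0Relations (A : Type*) [Ring A] [StarRing A] : Set (FreeAbelianGroup (K0Gen A)) :=
  {x | ∃ p q : K0Gen A, p.IsProj ∧ q.IsProj ∧
        (x = FreeAbelianGroup.of (p.dsum q) - FreeAbelianGroup.of p - FreeAbelianGroup.of q ∨
          (p.MvN q ∧ x = FreeAbelianGroup.of p - FreeAbelianGroup.of q))}

/-- The `K₀`-group of a unital ring with involution, presented by generators (projections in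
matrix algebras over `A`) and the standard relations. -/
def K0 (A : Type*) [Ring A] [StarRing A] : Type _ :=
  FreeAbelianGroup (K0Gen A) ⧸ AddSubgroup.closure (K0Relations A)

noncomputable instance (A : Type*) [Ring A] [StarRing A] : AddCommGroup (K0 A) :=
  QuotientAddGroup.Quotient.addCommGroup _

/-- The `K₀`-class of an element of `A`, viewed as a `1 × 1` matrix. -/
def K0.classOf {A : Type*} [Ring A] [StarRing A] (a : A) : K0 A :=
  QuotientAddGroup.mk (FreeAbelianGroup.of ⟨1, Matrix.of fun _ _ => a⟩)

/-! The partial isometry `w = (1 + J) p / √2` has `w⋆ w = p` and `w w⋆ = (1 + J) / 2`, because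
the relation `J p + p J = J` gives `p J p = 0` and `J p J = 1 - p`; replacing `J` by `-J` gives
the same for `(1 - J) / 2`. The projections `(1 ± J) / 2` are complementary, and orthogonal
projections `e, f` satisfy `[e] + [f] = [e + f]` (move `diag(e, f)` to `diag(e + f, 0)`), so
`2 [p] = [1]`. -/

section IsProjectionElem

variable {A : Type*} [Ring A] [StarRing A] {e f : A}

theorem IsProjectionElem.zero : IsProjectionElem (0 : A) :=
  ⟨mul_zero 0, star_zero A⟩

theorem IsProjectionElem.one_sub (he : IsProjectionElem e) : IsProjectionElem (1 - e) :=
  ⟨by simp only [sub_mul, mul_sub, he.1, one_mul, mul_one, sub_self, sub_zero],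
    by rw [star_sub, star_one, he.2]⟩

theorem IsProjectionElem.mul_eq_zero_comm (he : IsProjectionElem e) (hf : IsProjectionElem f)
    (hef : e * f = 0) : f * e = 0 := by
  rw [← he.2, ← hf.2, ← star_mul, hef, star_zero]

theorem IsProjectionElem.add (he : IsProjectionElem e) (hf : IsProjectionElem f)
    (hef : e * f = 0) : IsProjectionElem (e + f) :=
  ⟨by rw [add_mul, mul_add, mul_add, he.1, hf.1, hef, he.mul_eq_zero_comm hf hef, add_zero,
      zero_add],
    by rw [star_add, he.2, hf.2]⟩

end IsProjectionElem

namespace K0Gen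

variable {A : Type*} [Ring A] [StarRing A]

def ofElem (a : A) : K0Gen A := ⟨1, Matrix.of fun _ _ => a⟩

theorem isProj_ofElem {a : A} (ha : IsProjectionElem a) : (ofElem a).IsProj := by
  dsimp only [IsProj, ofElem]
  constructor <;> ext i j
  · simp [Matrix.mul_apply, ha.1]
  · simp [ha.2]

theorem mvn_ofElem {a b w : A} (ha : star w * w = a) (hb : w * star w = b) :
    (ofElem a).MvN (ofElem b) := by
  dsimp only [MvN, ofElem]
  refine ⟨Matrix.of fun _ _ => w, ?_, ?_⟩ <;> ext i j
  · simp [Matrix.mul_apply, ha]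
  · simp [Matrix.mul_apply, hb]

theorem IsProj.dsum {p q : K0Gen A} (hp : p.IsProj) (hq : q.IsProj) : (p.dsum q).IsProj := by
  dsimp only [IsProj, K0Gen.dsum]
  constructor
  · rw [Matrix.reindex_apply, Matrix.submatrix_mul_equiv, Matrix.fromBlocks_multiply]
    simp [hp.1, hq.1]
  · rw [Matrix.star_eq_conjTranspose, Matrix.conjTranspose_reindex,
      Matrix.fromBlocks_conjTranspose]
    simp [← Matrix.star_eq_conjTranspose, hp.2, hq.2]

theorem mvn_dsum_of_fromBlocks {p₁ p₂ q₁ q₂ : K0Gen A}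
    (V : Matrix (Fin q₁.1 ⊕ Fin q₂.1) (Fin p₁.1 ⊕ Fin p₂.1) A)
    (hp : Vᴴ * V = Matrix.fromBlocks p₁.2 0 0 p₂.2)
    (hq : V * Vᴴ = Matrix.fromBlocks q₁.2 0 0 q₂.2) :
    (p₁.dsum p₂).MvN (q₁.dsum q₂) := by
  dsimp only [MvN, K0Gen.dsum]
  refine ⟨Matrix.reindex finSumFinEquiv finSumFinEquiv V, ?_, ?_⟩ <;>
    simp only [Matrix.reindex_apply, Matrix.conjTranspose_submatrix, Matrix.submatrix_mul_equiv,
      hp, hq]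

theorem mvn_of_eq_zero {p q : K0Gen A} (hp : p.2 = 0) (hq : q.2 = 0) : p.MvN q :=
  ⟨0, by simp [hp], by simp [hq]⟩

end K0Gen

namespace K0

variable {A : Type*} [Ring A] [StarRing A]

def mk (p : K0Gen A) : K0 A := QuotientAddGroup.mk (FreeAbelianGroup.of p)

theorem classOf_eq_mk (a : A) : classOf a = mk (K0Gen.ofElem a) := rfl

theorem mk_eq_zero_of_mem_relations {x : FreeAbelianGroup (K0Gen A)} (hx : x ∈ K0Relations A) :
    (QuotientAddGroup.mk x : K0 A) = 0 :=
  (QuotientAddGroup.eq_zero_iff x).2 (AddSubgroup.subset_closure hx)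

theorem mk_eq_mk_of_mvn {p q : K0Gen A} (hp : p.IsProj) (hq : q.IsProj) (h : p.MvN q) :
    mk p = mk q := by
  have h0 := mk_eq_zero_of_mem_relations ⟨p, q, hp, hq, Or.inr ⟨h, rfl⟩⟩
  rwa [QuotientAddGroup.mk_sub, sub_eq_zero] at h0

theorem mk_dsum {p q : K0Gen A} (hp : p.IsProj) (hq : q.IsProj) :
    mk (p.dsum q) = mk p + mk q := by
  have h0 := mk_eq_zero_of_mem_relations ⟨p, q, hp, hq, Or.inl rfl⟩
  rwa [QuotientAddGroup.mk_sub, QuotientAddGroup.mk_sub, sub_sub, sub_eq_zero] at h0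

theorem classOf_eq_classOf_of_mvn {a b w : A} (ha : IsProjectionElem a)
    (hb : IsProjectionElem b) (hwa : star w * w = a) (hwb : w * star w = b) :
    classOf a = classOf b :=
  mk_eq_mk_of_mvn (K0Gen.isProj_ofElem ha) (K0Gen.isProj_ofElem hb) (K0Gen.mvn_ofElem hwa hwb)

theorem classOf_zero : classOf (0 : A) = 0 := by
  have h0 : (K0Gen.ofElem (0 : A)).IsProj := K0Gen.isProj_ofElem .zero
  have hz : (K0Gen.ofElem (0 : A)).2 = 0 := Matrix.of_zero
  have hzz : ((K0Gen.ofElem (0 : A)).dsum (K0Gen.ofElem 0)).2 = 0 := by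
    simp only [K0Gen.dsum, hz, Matrix.fromBlocks_zero, Matrix.reindex_apply]; rfl
  have hdouble : mk ((K0Gen.ofElem (0 : A)).dsum (K0Gen.ofElem 0)) = mk (K0Gen.ofElem 0) :=
    mk_eq_mk_of_mvn (h0.dsum h0) h0 (K0Gen.mvn_of_eq_zero hzz hz)
  rw [mk_dsum h0 h0, add_eq_right] at hdouble
  rw [classOf_eq_mk, hdouble]

/-- `diag(e, f)` is equivalent to `diag(e + f, 0)` via the partial isometry `[[e, f], [0, 0]]`. -/
theorem classOf_add_of_mul_eq_zero {e f : A} (he : IsProjectionElem e) (hf : IsProjectionElem f)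
    (hef : e * f = 0) : classOf e + classOf f = classOf (e + f) := by
  have hfe : f * e = 0 := he.mul_eq_zero_comm hf hef
  let V : Matrix (Fin 1 ⊕ Fin 1) (Fin 1 ⊕ Fin 1) A :=
    Matrix.fromBlocks (Matrix.of fun _ _ => e) (Matrix.of fun _ _ => f) 0 0
  have hVV : Vᴴ * V =
      Matrix.fromBlocks (Matrix.of fun _ _ => e) 0 0 (Matrix.of fun _ _ => f) := by
    ext (i | i) (j | j) <;> simp [V, Matrix.fromBlocks_conjTranspose,
      Matrix.mul_apply, he.1, he.2, hf.1, hf.2, hef, hfe]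
  have hVV' : V * Vᴴ =
      Matrix.fromBlocks (Matrix.of fun _ _ => e + f) 0 0 (Matrix.of fun _ _ => 0) := by
    ext (i | i) (j | j) <;> simp [V, Matrix.fromBlocks_conjTranspose,
      Matrix.mul_apply, he.1, he.2, hf.1, hf.2]
  have hmvn : ((K0Gen.ofElem e).dsum (K0Gen.ofElem f)).MvN
      ((K0Gen.ofElem (e + f)).dsum (K0Gen.ofElem 0)) :=
    K0Gen.mvn_dsum_of_fromBlocks V hVV hVV'
  have he' := K0Gen.isProj_ofElem he
  have hf' := K0Gen.isProj_ofElem hf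
  have hsum' := K0Gen.isProj_ofElem (he.add hf hef)
  have h0 := K0Gen.isProj_ofElem (IsProjectionElem.zero (A := A))
  rw [classOf_eq_mk, classOf_eq_mk, classOf_eq_mk, ← mk_dsum he' hf',
    mk_eq_mk_of_mvn (he'.dsum hf') (hsum'.dsum h0) hmvn, mk_dsum hsum' h0, ← classOf_eq_mk,
    ← classOf_eq_mk, classOf_zero, add_zero]

theorem classOf_add_classOf_one_sub {e : A} (he : IsProjectionElem e) :
    classOf e + classOf (1 - e) = classOf 1 := by
  rw [classOf_add_of_mul_eq_zero he he.one_sub (by rw [mul_sub, he.1, mul_one, sub_self]),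
    add_sub_cancel]

end K0

section AnticommutingInvolution

variable {A : Type*} [Ring A] [StarRing A] {p J : A}

theorem star_mul_self_one_add_mul (hp : IsProjectionElem p) (hJ : star J = J) (hJ2 : J * J = 1)
    (hJp : J * p + p * J = J) :
    star ((1 + J) * p) * ((1 + J) * p) = p + p := by
  have hpJp : p * J * p = 0 := by
    have h : p * (J * p + p * J) = p * J := by rw [hJp]
    rwa [mul_add, ← mul_assoc, ← mul_assoc, hp.1, add_eq_right] at h
  calc star ((1 + J) * p) * ((1 + J) * p) = p * p + p * (J * J) * p + (p * J * p + p * J * p) := by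
        rw [star_mul, star_add, star_one, hJ, hp.2]; noncomm_ring
    _ = p + p := by rw [hJ2, mul_one, hp.1, hpJp]; abel

theorem mul_star_self_one_add_mul (hp : IsProjectionElem p) (hJ : star J = J) (hJ2 : J * J = 1)
    (hJp : J * p + p * J = J) :
    ((1 + J) * p) * star ((1 + J) * p) = 1 + J := by
  have hJpJ : J * p * J = 1 - p := by
    have h : (J * p + p * J) * J = J * J := by rw [hJp]
    rw [add_mul, mul_assoc p, hJ2, mul_one] at h
    exact eq_sub_of_add_eq h
  calc ((1 + J) * p) * star ((1 + J) * p) = (1 + J) * (p * p) * (1 + J) := by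
        rw [star_mul, star_add, star_one, hJ, hp.2]; noncomm_ring
    _ = p + (J * p + p * J) + J * p * J := by rw [hp.1]; noncomm_ring
    _ = 1 + J := by rw [hJp, hJpJ]; abel

variable {𝕜 : Type*} [RCLike 𝕜] [Algebra 𝕜 A] [StarModule 𝕜 A]

theorem isProjectionElem_half_one_add (hJ : star J = J) (hJ2 : J * J = 1) :
    IsProjectionElem ((2 : 𝕜)⁻¹ • (1 + J)) := by
  constructor
  · have h : (1 + J) * (1 + J) = (2 : 𝕜) • (1 + J) := by
      rw [two_smul, add_mul, mul_add, mul_add, hJ2, one_mul, one_mul, mul_one]; abel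
    rw [smul_mul_smul_comm, h, smul_smul, mul_assoc, inv_mul_cancel₀ two_ne_zero, mul_one]
  · rw [star_smul, star_inv₀, star_ofNat, star_add, star_one, hJ]

theorem K0.classOf_eq_classOf_half_one_add (hp : IsProjectionElem p) (hJ : star J = J)
    (hJ2 : J * J = 1) (hJp : J * p + p * J = J) :
    K0.classOf p = K0.classOf ((2 : 𝕜)⁻¹ • (1 + J)) := by
  let s : 𝕜 := ((√2 : ℝ) : 𝕜)⁻¹
  have hs : star s = s := by simp [s, RCLike.star_def]
  have hss : s * s = 2⁻¹ := by
    rw [← mul_inv, ← RCLike.ofReal_mul, Real.mul_self_sqrt zero_le_two, RCLike.ofReal_ofNat]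
  refine K0.classOf_eq_classOf_of_mvn hp (isProjectionElem_half_one_add hJ hJ2)
    (w := s • ((1 + J) * p)) ?_ ?_
  · rw [star_smul, hs, smul_mul_smul_comm, hss, star_mul_self_one_add_mul hp hJ hJ2 hJp,
      ← two_smul 𝕜, smul_smul, inv_mul_cancel₀ two_ne_zero, one_smul]
  · rw [star_smul, hs, smul_mul_smul_comm, hss, mul_star_self_one_add_mul hp hJ hJ2 hJp]

end AnticommutingInvolution

theorem projection_anticommuting_involution_K0_general
    {A : Type*} [NormedRing A] [StarRing A]
    [NormedAlgebra ℂ A] [StarModule ℂ A]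
    (p J : A) (hp : IsProjectionElem p) (hJ : star J = J) (hJ2 : J * J = 1)
    (hJp : J * p + p * J = J) :
    K0.classOf p = K0.classOf ((2 : ℂ)⁻¹ • (1 + J)) ∧
    K0.classOf p = K0.classOf ((2 : ℂ)⁻¹ • (1 - J)) ∧
    (2 : ℤ) • K0.classOf p = K0.classOf (1 : A) := by
  have hplus : K0.classOf p = K0.classOf ((2 : ℂ)⁻¹ • (1 + J)) :=
    K0.classOf_eq_classOf_half_one_add hp hJ hJ2 hJp
  have hminus : K0.classOf p = K0.classOf ((2 : ℂ)⁻¹ • (1 - J)) := by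
    rw [sub_eq_add_neg]
    exact K0.classOf_eq_classOf_half_one_add hp (by rw [star_neg, hJ]) (by rw [neg_mul_neg, hJ2])
      (by rw [neg_mul, mul_neg, ← neg_add, hJp])
  have hcompl : (2 : ℂ)⁻¹ • (1 - J) = 1 - (2 : ℂ)⁻¹ • (1 + J) := by module
  refine ⟨hplus, hminus, ?_⟩
  rw [two_zsmul]
  nth_rw 1 [hplus]
  rw [hminus, hcompl, K0.classOf_add_classOf_one_sub (isProjectionElem_half_one_add hJ hJ2)]

/-- If `p` is a projection in a unital C*-algebra and `J` is a self-adjoint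
involution with `Jp + pJ = J`, then `[p] = [(1+J)/2]` and `[p] = [(1-J)/2]` in `K₀(A)`;
in particular `2[p] = [1]` in `K₀(A)`. -/
theorem projection_anticommuting_involution_K0
    {A : Type*} [NormedRing A] [StarRing A] [CStarRing A]
    [NormedAlgebra ℂ A] [CompleteSpace A] [StarModule ℂ A]
    (p J : A) (hp : IsProjectionElem p) (hJ : star J = J) (hJ2 : J * J = 1)
    (hJp : J * p + p * J = J) :
    K0.classOf p = K0.classOf ((2 : ℂ)⁻¹ • (1 + J)) ∧
    K0.classOf p = K0.classOf ((2 : ℂ)⁻¹ • (1 - J)) ∧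
    (2 : ℤ) • K0.classOf p = K0.classOf (1 : A) :=
  projection_anticommuting_involution_K0_general p J hp hJ hJ2 hJp
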